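/- arXiv:1004.0154 — 7 statements merged into one kernel-verified Lean document; each statement's English description precedes it below -/
import Mathlib

section
/- Let M be a matroid (in the Bruhn–Diestel–Kriesell–Wollan sense, allowing infinite ground sets) with ground set E, and let B ⊆ A ⊆ E. Then there exist independent sets I, J of M with J ⊆ I, I maximal among independent subsets of A, and J maximal among independent subsets of B; moreover, for any such pair I, J, the relative rank r_M(A|B) equals the cardinality |I \ J|. -/
/-!
If `I ⊇ J` are maximal independent subsets of `A` and of `B` respectively, then `I \ J = I \ B`
is a basis of `A \ B` in the contraction `M ／ B`, so `|I \ J|` is the rank of `A \ B` in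
`M ／ B` and does not depend on the choice of `I` and `J`. Every independent `I' ⊇ J` inside `A`
extends to such an `I`, which bounds the supremum defining the relative rank by this value.
-/

open Set Matroid

variable {α : Type*}

/-- `J` is a maximal independent subset of `B` in the matroid `M`. -/
def Matroid.IsMaxIndepIn (M : Matroid α) (J B : Set α) : Prop :=
  M.Indep J ∧ J ⊆ B ∧ ∀ ⦃J' : Set α⦄, M.Indep J' → J ⊆ J' → J' ⊆ B → J' = J

/-- The relative rank `r_M(A|B)`: the maximum of `|I \ J|` over pairs `J ⊆ I ⊆ A` with
`I` independent and `J` a maximal independent subset of `B`. -/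
noncomputable def Matroid.relRank (M : Matroid α) (A B : Set α) : ℕ∞ :=
  sSup {n : ℕ∞ | ∃ I J : Set α,
    M.Indep I ∧ J ⊆ I ∧ I ⊆ A ∧ M.IsMaxIndepIn J B ∧ n = (I \ J).encard}

namespace Matroid

variable {M : Matroid α} {A B I J : Set α}

lemma isMaxIndepIn_iff_isBasis' : M.IsMaxIndepIn J B ↔ M.IsBasis' J B :=
  ⟨fun ⟨hJ, hJB, hmax⟩ ↦ ⟨⟨hJ, hJB⟩, fun _ hJ' hJJ' ↦ (hmax hJ'.1 hJJ' hJ'.2).le⟩,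
    fun h ↦ ⟨h.indep, h.subset, fun _ hJ' hJJ' hJ'B ↦ (h.eq_of_subset_indep hJ' hJJ' hJ'B).symm⟩⟩

lemma exists_isBasis'_subset_isBasis' (hBA : B ⊆ A) :
    ∃ I J, J ⊆ I ∧ M.IsBasis' I A ∧ M.IsBasis' J B := by
  obtain ⟨J, hJ⟩ := M.exists_isBasis' B
  obtain ⟨I, hI, hJI⟩ := hJ.indep.subset_isBasis'_of_subset (hJ.subset.trans hBA)
  exact ⟨I, J, hJI, hI, hJ⟩

lemma IsBasis'.encard_sdiff_eq_eRk_contract (hI : M.IsBasis' I A) (hJ : M.IsBasis' J B)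
    (hJI : J ⊆ I) : (I \ J).encard = (M ／ B).eRk (A \ B) := by
  have hIB : I ∩ B = J :=
    (hJ.eq_of_subset_indep (hI.indep.subset inter_subset_left) (subset_inter hJI hJ.subset)
      inter_subset_right).symm
  have hbasis : (M ／ B).IsBasis' (I \ B) (A \ B) :=
    hI.contract_isBasis' hJ (hI.indep.subset (union_subset sdiff_subset hJI))
  rw [← hbasis.encard_eq_eRk, ← hIB, sdiff_self_inter]

lemma relRank_eq_eRk_contract (hBA : B ⊆ A) : M.relRank A B = (M ／ B).eRk (A \ B) := by
  obtain ⟨I, J, hJI, hI, hJ⟩ := exists_isBasis'_subset_isBasis' (M := M) hBA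
  refine le_antisymm (sSup_le ?_) (le_sSup ?_)
  · rintro _ ⟨I', J', hI', hJ'I', hI'A, hJ', rfl⟩
    obtain ⟨I'', hI'', hI'I''⟩ := hI'.subset_isBasis'_of_subset hI'A
    calc (I' \ J').encard ≤ (I'' \ J').encard := encard_le_encard (sdiff_subset_sdiff_left hI'I'')
      _ = (M ／ B).eRk (A \ B) :=
        hI''.encard_sdiff_eq_eRk_contract (isMaxIndepIn_iff_isBasis'.1 hJ') (hJ'I'.trans hI'I'')
  · exact ⟨I, J, hI.indep, hJI, hI.subset, isMaxIndepIn_iff_isBasis'.2 hJ,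
      (hI.encard_sdiff_eq_eRk_contract hJ hJI).symm⟩

end Matroid

theorem stmt_0_general (M : Matroid α) (A B : Set α) (hBA : B ⊆ A) :
    (∃ I J : Set α, J ⊆ I ∧ M.IsMaxIndepIn I A ∧ M.IsMaxIndepIn J B) ∧
      ∀ I J : Set α, J ⊆ I → M.IsMaxIndepIn I A → M.IsMaxIndepIn J B →
        M.relRank A B = (I \ J).encard := by
  refine ⟨?_, fun I J hJI hI hJ ↦ ?_⟩
  · obtain ⟨I, J, hJI, hI, hJ⟩ := exists_isBasis'_subset_isBasis' (M := M) hBA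
    exact ⟨I, J, hJI, isMaxIndepIn_iff_isBasis'.2 hI, isMaxIndepIn_iff_isBasis'.2 hJ⟩
  rw [relRank_eq_eRk_contract hBA, (isMaxIndepIn_iff_isBasis'.1 hI).encard_sdiff_eq_eRk_contract
    (isMaxIndepIn_iff_isBasis'.1 hJ) hJI]

theorem stmt_0 (M : Matroid α) (A B : Set α) (hBA : B ⊆ A) (hAE : A ⊆ M.E) :
    (∃ I J : Set α, J ⊆ I ∧ M.IsMaxIndepIn I A ∧ M.IsMaxIndepIn J B) ∧
      ∀ I J : Set α, J ⊆ I → M.IsMaxIndepIn I A → M.IsMaxIndepIn J B →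
        M.relRank A B = (I \ J).encard :=
  stmt_0_general M A B hBA
end

section
/- Let E be a set and let r be a function assigning to each pair of sets B ⊆ A ⊆ E a value r(A|B) ∈ ℕ ∪ {∞}, satisfying: (R1) 0 ≤ r(A|B) ≤ |A \ B| for all B ⊆ A ⊆ E; (R2) r(A | A∩B) ≥ r(A∪B | B) for all A, B ⊆ E; (R3) r(A|C) = r(A|B) + r(B|C) for all C ⊆ B ⊆ A ⊆ E; (R4) if A = ⋃_{γ∈Γ} A_γ with B ⊆ A_γ ⊆ E for all γ and r(A_γ|B) = 0 for all γ ∈ Γ, then r(A|B) = 0; (R5) for all B ⊆ A ⊆ E there exists I ∈ 𝓘_r with I ⊆ A such that r(A|I) = 0 and r(B | B∩I) = 0, where 𝓘_r := { I ⊆ E : r(I | I−x) > 0 for all x ∈ I }. Then M = (E, 𝓘_r) is a matroid (in the Bruhn–Diestel–Kriesell–Wollan sense), and for all B ⊆ A ⊆ E, the relative rank r_M(A|B) of M equals r(A|B). -/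
/-!
A set `I ⊆ X ⊆ E` with `I ∈ 𝓘_r` is a maximal `r`-independent subset of `X` exactly when
`r(X|I) = 0`: one direction by (R3), the other by (R4) applied to the sets `I + x`, `x ∈ X`, each
of which has `r(I + x | I) = 0` by maximality. With this, (R5) yields maximal independent
extensions, and augmentation follows by computing `r(E|I)` through `I ∪ B`. Moreover, on an
independent set `I`, (R1)–(R3) force `r(I|J) = |I \ J|`, so for `J ⊆ I ⊆ A` with `J` a basis of
`B`, (R3) gives `r(A|B) = r(A|J) ≥ r(I|J) = |I \ J|`, with equality for the pair from (R5).
-/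

open Set Matroid

variable {α : Type*}

/-- `I` is `r`-independent (`I ∈ 𝓘_r`) with respect to the ground set `E`:
`I ⊆ E` and `r(I | I - x) > 0` for every `x ∈ I`. -/
def RIndep (E : Set α) (r : Set α → Set α → ℕ∞) (I : Set α) : Prop :=
  I ⊆ E ∧ ∀ x ∈ I, 0 < r I (I \ {x})

theorem Matroid.isMaxIndepIn_iff_isBasis'_s9 {M : Matroid α} {J B : Set α} :
    M.IsMaxIndepIn J B ↔ M.IsBasis' J B :=
  ⟨fun ⟨hJ, hJB, hmax⟩ ↦ ⟨⟨hJ, hJB⟩, fun _ ⟨hK, hKB⟩ hJK ↦ (hmax hK hJK hKB).le⟩,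
    fun h ↦ ⟨h.1.1, h.1.2, fun _ hK hJK hKB ↦ (h.eq_of_subset ⟨hK, hKB⟩ hJK).symm⟩⟩

namespace RelRank

def LeEncard (E : Set α) (r : Set α → Set α → ℕ∞) : Prop :=
  ∀ A B : Set α, B ⊆ A → A ⊆ E → r A B ≤ (A \ B).encard

def Submodular (E : Set α) (r : Set α → Set α → ℕ∞) : Prop :=
  ∀ A B : Set α, A ⊆ E → B ⊆ E → r (A ∪ B) B ≤ r A (A ∩ B)

def Additive (E : Set α) (r : Set α → Set α → ℕ∞) : Prop :=
  ∀ A B C : Set α, C ⊆ B → B ⊆ A → A ⊆ E → r A C = r A B + r B C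

def SUnionZero (E : Set α) (r : Set α → Set α → ℕ∞) : Prop :=
  ∀ (B : Set α) (S : Set (Set α)), (∀ A' ∈ S, B ⊆ A' ∧ A' ⊆ E) →
    (∀ A' ∈ S, r A' B = 0) → r (⋃₀ S) B = 0

def ExistsCompatibleBasis (E : Set α) (r : Set α → Set α → ℕ∞) : Prop :=
  ∀ A B : Set α, B ⊆ A → A ⊆ E →
    ∃ I : Set α, RIndep E r I ∧ I ⊆ A ∧ r A I = 0 ∧ r B (B ∩ I) = 0

end RelRank

open RelRank

section

variable {E : Set α} {r : Set α → Set α → ℕ∞} {A B C I J X : Set α} {x : α}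

theorem RelRank.LeEncard.self_eq_zero (h1 : LeEncard E r) (hA : A ⊆ E) : r A A = 0 :=
  nonpos_iff_eq_zero.1 (by simpa using h1 A A Subset.rfl hA)

theorem RelRank.LeEncard.le_one (h1 : LeEncard E r) (hBA : B ⊆ A) (hAE : A ⊆ E)
    (hAB : A \ B ⊆ {x}) : r A B ≤ 1 :=
  (h1 A B hBA hAE).trans ((encard_le_encard hAB).trans (encard_singleton x).le)

theorem RelRank.Additive.mono (h3 : Additive E r) (hCB : C ⊆ B) (hBA : B ⊆ A) (hAE : A ⊆ E) :
    r B C ≤ r A C :=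
  (h3 A B C hCB hBA hAE).symm ▸ le_add_self

theorem RelRank.Additive.eq_zero_and_eq_zero (h3 : Additive E r) (hCB : C ⊆ B) (hBA : B ⊆ A)
    (hAE : A ⊆ E) (h : r A C = 0) : r A B = 0 ∧ r B C = 0 := by
  rwa [h3 A B C hCB hBA hAE, add_eq_zero] at h

theorem RelRank.SUnionZero.eq_zero_of_forall_insert (h4 : SUnionZero E r) (h1 : LeEncard E r)
    (hIX : I ⊆ X) (hXE : X ⊆ E) (h : ∀ x ∈ X \ I, r (insert x I) I = 0) : r X I = 0 := by
  have hS : ⋃₀ insert I ((insert · I) '' X) = X := by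
    refine subset_antisymm (sUnion_subset ?_) fun y hy ↦ ⟨_, Or.inr ⟨y, hy, rfl⟩, mem_insert y I⟩
    rintro _ (rfl | ⟨x, hx, rfl⟩)
    exacts [hIX, insert_subset hx hIX]
  rw [← hS]
  refine h4 I _ ?_ ?_
  · rintro _ (rfl | ⟨x, hx, rfl⟩)
    exacts [⟨Subset.rfl, hIX.trans hXE⟩,
      ⟨subset_insert x I, insert_subset (hXE hx) (hIX.trans hXE)⟩]
  · rintro _ (rfl | ⟨x, hx, rfl⟩)
    · exact h1.self_eq_zero (hIX.trans hXE)
    · dsimp only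
      by_cases hxI : x ∈ I
      · rw [insert_eq_of_mem hxI]
        exact h1.self_eq_zero (hIX.trans hXE)
      · exact h x ⟨hx, hxI⟩

theorem rIndep_empty : RIndep E r ∅ :=
  ⟨empty_subset E, fun _ hx ↦ absurd hx (notMem_empty _)⟩

theorem RIndep.subset (hJ : RIndep E r J) (h2 : Submodular E r) (hIJ : I ⊆ J) :
    RIndep E r I := by
  refine ⟨hIJ.trans hJ.1, fun x hx ↦ (hJ.2 x (hIJ hx)).trans_le ?_⟩
  have hunion : I ∪ (J \ {x}) = J := union_sdiff_cancel' (singleton_subset_iff.2 hx) hIJ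
  have hinter : I ∩ (J \ {x}) = I \ {x} := by
    rw [← inter_sdiff_assoc, inter_eq_left.2 hIJ]
  simpa only [hunion, hinter] using h2 I (J \ {x}) (hIJ.trans hJ.1) (sdiff_subset.trans hJ.1)

theorem RIndep.subset_of_eq_zero (hJ : RIndep E r J) (h3 : Additive E r) (hIJ : I ⊆ J)
    (h0 : r J I = 0) : J ⊆ I := by
  intro x hxJ
  by_contra hxI
  exact (hJ.2 x hxJ).ne'
    (h3.eq_zero_and_eq_zero (subset_sdiff_singleton hIJ hxI) sdiff_subset hJ.1 h0).1

theorem RIndep.relRank_diff_singleton (hI : RIndep E r I) (h1 : LeEncard E r) (hx : x ∈ I) :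
    r I (I \ {x}) = 1 :=
  le_antisymm
    (h1.le_one sdiff_subset hI.1 (sdiff_sdiff_cancel_left (singleton_subset_iff.2 hx)).le)
    (Order.one_le_iff_ne_zero.2 (hI.2 x hx).ne')

/-- For `y ∈ I`, `r(I + x | I - y) ≥ 2` by (R3) while `r(I + x - y | I - y) ≤ 1` by (R1), so
`r(I + x | I + x - y) > 0`. -/
theorem RIndep.insert_of_relRank_pos (hI : RIndep E r I) (h1 : LeEncard E r) (h3 : Additive E r)
    (hx : x ∈ E) (hxI : x ∉ I) (h : 0 < r (insert x I) I) : RIndep E r (insert x I) := by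
  have hxIE : insert x I ⊆ E := insert_subset hx hI.1
  refine ⟨hxIE, fun y hy ↦ ?_⟩
  obtain rfl | hyx := eq_or_ne y x
  · rwa [insert_sdiff_self_of_notMem hxI]
  have hyI : y ∈ I := hy.resolve_left hyx
  have hsub : I \ {y} ⊆ insert x I \ {y} := sdiff_subset_sdiff_left (subset_insert x I)
  have htwo : 2 ≤ r (insert x I) (I \ {y}) := by
    rw [h3 _ I _ sdiff_subset (subset_insert x I) hxIE, ← one_add_one_eq_two]
    exact add_le_add (Order.one_le_iff_ne_zero.2 h.ne')
      (Order.one_le_iff_ne_zero.2 (hI.2 y hyI).ne')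
  have hone : r (insert x I \ {y}) (I \ {y}) ≤ 1 :=
    h1.le_one hsub (sdiff_subset.trans hxIE) fun _ ⟨⟨hz, hzy⟩, hzI⟩ ↦
      hz.resolve_right fun hzI' ↦ hzI ⟨hzI', hzy⟩
  rw [h3 _ _ _ hsub sdiff_subset hxIE] at htwo
  refine pos_iff_ne_zero.2 fun h0 ↦ ?_
  rw [h0, zero_add] at htwo
  exact absurd (htwo.trans hone) (by norm_num)

theorem RIndep.relRank_diff_eq_encard (hI : RIndep E r I) (h1 : LeEncard E r)
    (h2 : Submodular E r) (h3 : Additive E r) {F : Set α} (hF : F.Finite) (hFI : F ⊆ I) :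
    r I (I \ F) = F.encard := by
  induction F, hF using Set.Finite.induction_on with
  | empty => simpa using h1.self_eq_zero hI.1
  | @insert a F haF _ ih =>
    have hK : RIndep E r (I \ F) := hI.subset h2 sdiff_subset
    have haK : a ∈ I \ F := ⟨hFI (mem_insert a F), haF⟩
    have hKa : (I \ F) \ {a} = I \ insert a F := by rw [Set.sdiff_sdiff, union_comm, insert_eq]
    rw [encard_insert_of_notMem haF, ← ih ((subset_insert a F).trans hFI), ← hKa,
      h3 I (I \ F) _ sdiff_subset sdiff_subset hI.1, hK.relRank_diff_singleton h1 haK]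

theorem RIndep.relRank_eq_encard (hI : RIndep E r I) (h1 : LeEncard E r) (h2 : Submodular E r)
    (h3 : Additive E r) (hJI : J ⊆ I) : r I J = (I \ J).encard := by
  refine le_antisymm (h1 I J hJI hI.1) (ENat.forall_natCast_le_iff_le.1 fun n hn ↦ ?_)
  obtain ⟨F, hF, hFn⟩ := exists_subset_encard_eq hn
  have hJF : J ⊆ I \ F := fun y hy ↦ ⟨hJI hy, fun hyF ↦ (hF hyF).2 hy⟩
  calc (n : ℕ∞) = r I (I \ F) :=
        (hFn ▸ hI.relRank_diff_eq_encard h1 h2 h3 (finite_of_encard_eq_coe hFn)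
          (hF.trans sdiff_subset)).symm
    _ ≤ r I J := h3 I _ J hJF sdiff_subset hI.1 ▸ le_self_add

theorem RIndep.maximal_of_eq_zero (hI : RIndep E r I) (h3 : Additive E r) (hIX : I ⊆ X)
    (hXE : X ⊆ E) (h0 : r X I = 0) : Maximal (fun J ↦ RIndep E r J ∧ J ⊆ X) I :=
  ⟨⟨hI, hIX⟩, fun _ ⟨hJ, hJX⟩ hIJ ↦
    hJ.subset_of_eq_zero h3 hIJ (h3.eq_zero_and_eq_zero hIJ hJX hXE h0).2⟩

theorem RelRank.eq_zero_of_maximal (h1 : LeEncard E r) (h3 : Additive E r) (h4 : SUnionZero E r)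
    (hXE : X ⊆ E) (hI : Maximal (fun J ↦ RIndep E r J ∧ J ⊆ X) I) : r X I = 0 := by
  refine h4.eq_zero_of_forall_insert h1 hI.1.2 hXE fun x ⟨hxX, hxI⟩ ↦ ?_
  by_contra h0
  have hxI' := hI.1.1.insert_of_relRank_pos h1 h3 (hXE hxX) hxI (pos_iff_ne_zero.2 h0)
  exact hxI (hI.2 ⟨hxI', insert_subset hxX hI.1.2⟩ (subset_insert x I) (mem_insert x I))

theorem maximal_rIndep_iff :
    Maximal (RIndep E r) I ↔ Maximal (fun J ↦ RIndep E r J ∧ J ⊆ E) I := by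
  rw [maximal_and_iff_right_of_imp fun _ h ↦ h.1, iff_self_and]; exact fun h ↦ h.1.1

theorem RIndep.exists_insert_of_not_maximal (hI : RIndep E r I) (h1 : LeEncard E r)
    (h3 : Additive E r) (h4 : SUnionZero E r) (hInmax : ¬Maximal (RIndep E r) I)
    (hBmax : Maximal (RIndep E r) B) : ∃ x ∈ B \ I, RIndep E r (insert x I) := by
  by_contra! hcon
  have hBE : B ⊆ E := hBmax.1.1
  have hIBE : I ∪ B ⊆ E := union_subset hI.1 hBE
  have hIB : r (I ∪ B) I = 0 := by
    refine h4.eq_zero_of_forall_insert h1 subset_union_left hIBE fun x ⟨hx, hxI⟩ ↦ ?_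
    have hxB : x ∈ B := hx.resolve_left hxI
    by_contra h0
    exact hcon x ⟨hxB, hxI⟩
      (hI.insert_of_relRank_pos h1 h3 (hBE hxB) hxI (pos_iff_ne_zero.2 h0))
  have hEB : r E (I ∪ B) = 0 :=
    (h3.eq_zero_and_eq_zero subset_union_right hIBE Subset.rfl
      (eq_zero_of_maximal h1 h3 h4 Subset.rfl (maximal_rIndep_iff.1 hBmax))).1
  have hEI : r E I = 0 := by rw [h3 E _ I subset_union_left hIBE Subset.rfl, hEB, hIB, add_zero]
  exact hInmax (maximal_rIndep_iff.2 (hI.maximal_of_eq_zero h3 hI.1 Subset.rfl hEI))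

theorem RelRank.existsMaximalSubsetProperty (h3 : Additive E r) (h5 : ExistsCompatibleBasis E r)
    (hXE : X ⊆ E) : ExistsMaximalSubsetProperty (RIndep E r) X := by
  intro I hI hIX
  obtain ⟨J, hJ, hJX, hXJ, hIJ⟩ := h5 X I hIX hXE
  exact ⟨J, (hI.subset_of_eq_zero h3 inter_subset_left hIJ).trans inter_subset_right,
    hJ.maximal_of_eq_zero h3 hJX hXE hXJ⟩

variable (E r) in
def RelRank.indepMatroid (h1 : LeEncard E r) (h2 : Submodular E r) (h3 : Additive E r)
    (h4 : SUnionZero E r) (h5 : ExistsCompatibleBasis E r) : IndepMatroid α where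
  E := E
  Indep := RIndep E r
  indep_empty := rIndep_empty
  indep_subset _ _ hJ hIJ := hJ.subset h2 hIJ
  indep_aug _ _ hI hInmax hBmax := hI.exists_insert_of_not_maximal h1 h3 h4 hInmax hBmax
  indep_maximal _ hXE := existsMaximalSubsetProperty h3 h5 hXE
  subset_ground _ hI := hI.1

theorem RelRank.relRank_indepMatroid (h1 : LeEncard E r) (h2 : Submodular E r) (h3 : Additive E r)
    (h4 : SUnionZero E r) (h5 : ExistsCompatibleBasis E r) (hBA : B ⊆ A) (hAE : A ⊆ E) :
    (indepMatroid E r h1 h2 h3 h4 h5).matroid.relRank A B = r A B := by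
  have hBE := hBA.trans hAE
  apply le_antisymm
  · refine sSup_le ?_
    rintro _ ⟨I, J, hI, hJI, hIA, hJB, rfl⟩
    rw [isMaxIndepIn_iff_isBasis'_s9] at hJB
    have hBJ : r B J = 0 := eq_zero_of_maximal h1 h3 h4 hBE hJB
    calc (I \ J).encard = r I J := (hI.relRank_eq_encard h1 h2 h3 hJI).symm
      _ ≤ r A J := h3.mono hJI hIA hAE
      _ = r A B := by rw [h3 A B J hJB.1.2 hBA hAE, hBJ, add_zero]
  · obtain ⟨I, hI, hIA, hAI, hBI⟩ := h5 A B hBA hAE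
    have hJI : B ∩ I ⊆ I := inter_subset_right
    have hJ : RIndep E r (B ∩ I) := hI.subset h2 hJI
    refine le_sSup ⟨I, B ∩ I, hI, hJI, hIA,
      isMaxIndepIn_iff_isBasis'_s9.2 (hJ.maximal_of_eq_zero h3 inter_subset_left hBE hBI), ?_⟩
    calc r A B = r A (B ∩ I) := by rw [h3 A B _ inter_subset_left hBA hAE, hBI, add_zero]
      _ = r I (B ∩ I) := by rw [h3 A I _ hJI hIA hAE, hAI, zero_add]
      _ = (I \ (B ∩ I)).encard := hI.relRank_eq_encard h1 h2 h3 hJI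

end

theorem stmt_9 (E : Set α) (r : Set α → Set α → ℕ∞)
    (hR1 : ∀ A B : Set α, B ⊆ A → A ⊆ E → r A B ≤ (A \ B).encard)
    (hR2 : ∀ A B : Set α, A ⊆ E → B ⊆ E → r (A ∪ B) B ≤ r A (A ∩ B))
    (hR3 : ∀ A B C : Set α, C ⊆ B → B ⊆ A → A ⊆ E → r A C = r A B + r B C)
    (hR4 : ∀ (B : Set α) (S : Set (Set α)), (∀ A' ∈ S, B ⊆ A' ∧ A' ⊆ E) →
      (∀ A' ∈ S, r A' B = 0) → r (⋃₀ S) B = 0)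
    (hR5 : ∀ A B : Set α, B ⊆ A → A ⊆ E →
      ∃ I : Set α, RIndep E r I ∧ I ⊆ A ∧ r A I = 0 ∧ r B (B ∩ I) = 0) :
    ∃ M : Matroid α, M.E = E ∧ (∀ I : Set α, M.Indep I ↔ RIndep E r I) ∧
      ∀ A B : Set α, B ⊆ A → A ⊆ E → M.relRank A B = r A B :=
  ⟨(indepMatroid E r hR1 hR2 hR3 hR4 hR5).matroid, rfl, fun _ ↦ Iff.rfl,
    fun _ _ hBA hAE ↦ relRank_indepMatroid hR1 hR2 hR3 hR4 hR5 hBA hAE⟩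
end

section
/- Let E be a set and let r assign to each pair B ⊆ A ⊆ E a value r(A|B) ∈ ℕ ∪ {∞} satisfying (R1) r(A|B) ≤ |A \ B| for all B ⊆ A ⊆ E, and (R3) r(A|C) = r(A|B) + r(B|C) for all C ⊆ B ⊆ A ⊆ E. If I ∈ 𝓘_r and x ∈ E \ I, then I + x ∈ 𝓘_r if and only if r(I + x | I) > 0. -/
open Set

variable {α : Type*}

/-!
The condition of `𝓘_r` at `x` itself is `r(I + x | I) > 0`, since `(I + x) - x = I`.
For `y ∈ I`, split `r(I + x | I - y)` in two ways with (R3): through `I` it is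
`r(I + x | I) + r(I | I - y) ≥ 2`, and through `I + x - y` it is
`r(I + x | I + x - y) + r(I + x - y | I - y)`, whose second summand is at most `1` by (R1).
Hence `r(I + x | I + x - y) > 0`.
-/

theorem ENat.pos_of_add_eq_add_of_le_one {a b c d : ℕ∞} (h : a + b = c + d)
    (ha : 0 < a) (hb : 0 < b) (hd : d ≤ 1) : 0 < c := by
  rw [pos_iff_ne_zero]
  rintro rfl
  have h2 : 2 ≤ a + b := by
    rw [← one_add_one_eq_two]
    exact add_le_add (Order.one_le_iff_pos.2 ha) (Order.one_le_iff_pos.2 hb)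
  rw [h, zero_add] at h2
  exact absurd (h2.trans hd) (by decide)

theorem le_one_of_diff_subset_singleton {E : Set α} {r : Set α → Set α → ℕ∞}
    (hR1 : ∀ A B : Set α, B ⊆ A → A ⊆ E → r A B ≤ (A \ B).encard)
    {A B : Set α} {x : α} (hBA : B ⊆ A) (hAE : A ⊆ E) (hAB : A \ B ⊆ {x}) : r A B ≤ 1 :=
  (hR1 A B hBA hAE).trans ((encard_le_encard hAB).trans (encard_singleton x).le)

theorem stmt_11 (E : Set α) (r : Set α → Set α → ℕ∞)
    (hR1 : ∀ A B : Set α, B ⊆ A → A ⊆ E → r A B ≤ (A \ B).encard)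
    (hR3 : ∀ A B C : Set α, C ⊆ B → B ⊆ A → A ⊆ E → r A C = r A B + r B C)
    (I : Set α) (x : α) (hI : RIndep E r I) (hx : x ∈ E \ I) :
    RIndep E r (I ∪ {x}) ↔ 0 < r (I ∪ {x}) I := by
  obtain ⟨hIE, hIindep⟩ := hI
  obtain ⟨hxE, hxI⟩ := hx
  have hIxE : I ∪ {x} ⊆ E := union_subset hIE (singleton_subset_iff.2 hxE)
  have hdelete_x : (I ∪ {x}) \ {x} = I := by rw [union_sdiff_right, sdiff_singleton_eq_self hxI]
  refine ⟨fun h ↦ by simpa only [hdelete_x] using h.2 x (Or.inr rfl), fun hpos ↦ ⟨hIxE, ?_⟩⟩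
  rintro y (hyI | rfl)
  · have hdelete_y : I \ {y} ⊆ (I ∪ {x}) \ {y} := sdiff_subset_sdiff_left subset_union_left
    have hsplit := (hR3 _ _ _ sdiff_subset subset_union_left hIxE).symm.trans
      (hR3 _ _ _ hdelete_y sdiff_subset hIxE)
    have hadd_x : ((I ∪ {x}) \ {y}) \ (I \ {y}) ⊆ {x} := by
      rintro z ⟨⟨hzI | hzx, hzy⟩, hz⟩
      exacts [absurd ⟨hzI, hzy⟩ hz, hzx]
    exact ENat.pos_of_add_eq_add_of_le_one hsplit hpos (hIindep y hyI)
      (le_one_of_diff_subset_singleton hR1 hdelete_y (sdiff_subset.trans hIxE) hadd_x)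
  · rwa [hdelete_x]
end

section
/- Let E be a set and let r assign to each pair B ⊆ A ⊆ E a value r(A|B) ∈ ℕ ∪ {∞} satisfying (R1) r(A|B) ≤ |A \ B| for all B ⊆ A ⊆ E; (R3) r(A|C) = r(A|B) + r(B|C) for all C ⊆ B ⊆ A ⊆ E; and (R4) if A = ⋃_{γ∈Γ} A_γ with B ⊆ A_γ ⊆ E for all γ and r(A_γ|B) = 0 for all γ, then r(A|B) = 0. If I ∈ 𝓘_r and I ⊆ F ⊆ E, then I is a maximal r-independent subset of F if and only if r(F|I) = 0. -/
/-! If `r(F | I) = 0` and `I ⊆ I' ⊆ F`, then by (R3) every `x ∈ I' \ I` has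
`r(I' | I' - x) = 0`, so `I'` is not independent unless `I' = I`. Conversely, if `I` is maximal
then `r(I + x | I) = 0` for every `x ∈ F`: otherwise `I + x` would be independent, because by
(R1) adding `x` alone costs at most `1`. Since `F` is the union of the sets `I + x`, (R4) gives
`r(F | I) = 0`. -/

open Set

variable {α : Type*}

section RelativeRank

variable {E : Set α} {r : Set α → Set α → ℕ∞}

lemma relRank_self_eq_zero
    (hR1 : ∀ A B : Set α, B ⊆ A → A ⊆ E → r A B ≤ (A \ B).encard)
    {A : Set α} (hA : A ⊆ E) : r A A = 0 := by
  simpa using hR1 A A subset_rfl hA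

lemma relRank_insert_le_one
    (hR1 : ∀ A B : Set α, B ⊆ A → A ⊆ E → r A B ≤ (A \ B).encard)
    {A : Set α} {x : α} (hA : insert x A ⊆ E) : r (insert x A) A ≤ 1 :=
  calc r (insert x A) A ≤ (insert x A \ A).encard := hR1 _ _ (subset_insert x A) hA
    _ ≤ ({x} : Set α).encard := encard_le_encard (by grind)
    _ = 1 := encard_singleton x

lemma relRank_eq_zero_of_chain
    (hR3 : ∀ A B C : Set α, C ⊆ B → B ⊆ A → A ⊆ E → r A C = r A B + r B C)
    {A B C : Set α} (hCB : C ⊆ B) (hBA : B ⊆ A) (hA : A ⊆ E) (h : r A C = 0) :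
    r A B = 0 ∧ r B C = 0 :=
  add_eq_zero.mp (hR3 A B C hCB hBA hA ▸ h)

lemma RIndep.insert_of_relRank_pos_s12
    (hR1 : ∀ A B : Set α, B ⊆ A → A ⊆ E → r A B ≤ (A \ B).encard)
    (hR3 : ∀ A B C : Set α, C ⊆ B → B ⊆ A → A ⊆ E → r A C = r A B + r B C)
    {I : Set α} {x : α} (hI : RIndep E r I) (hxI : x ∉ I) (hxE : x ∈ E)
    (hpos : 0 < r (insert x I) I) : RIndep E r (insert x I) := by
  have hE : insert x I ⊆ E := insert_subset hxE hI.1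
  refine ⟨hE, ?_⟩
  rintro y (rfl | hyI)
  · rwa [insert_sdiff_self_of_notMem hxI]
  have hyx : x ≠ y := fun h => hxI (h ▸ hyI)
  -- Split `r(I + x | I - y)` through `I` (at least `1 + 1`) and through `I + x - y`,
  -- where the last step adds only `x` and so costs at most `1`.
  have hsplit_x := hR3 _ _ (I \ {y}) sdiff_subset (subset_insert x I) hE
  have hsplit_y := hR3 _ (insert x I \ {y}) (I \ {y})
    (sdiff_subset_sdiff_left (subset_insert x I)) sdiff_subset hE
  have hstep : r (insert x I \ {y}) (I \ {y}) ≤ 1 := by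
    rw [← insert_sdiff_singleton_comm hyx]
    exact relRank_insert_le_one hR1 (insert_sdiff_singleton_comm hyx I ▸ sdiff_subset.trans hE)
  refine pos_iff_ne_zero.mpr fun h0 => ?_
  have : (2 : ℕ∞) ≤ 1 :=
    calc (2 : ℕ∞) = 1 + 1 := by norm_num
      _ ≤ r (insert x I) I + r I (I \ {y}) :=
        add_le_add (Order.one_le_iff_pos.mpr hpos) (Order.one_le_iff_pos.mpr (hI.2 y hyI))
      _ = r (insert x I \ {y}) (I \ {y}) := by rw [← hsplit_x, hsplit_y, h0, zero_add]
      _ ≤ 1 := hstep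
  norm_num at this

lemma RIndep.eq_of_relRank_eq_zero
    (hR3 : ∀ A B C : Set α, C ⊆ B → B ⊆ A → A ⊆ E → r A C = r A B + r B C)
    {I I' F : Set α} (hI' : RIndep E r I') (hII' : I ⊆ I') (hI'F : I' ⊆ F) (hFE : F ⊆ E)
    (hF : r F I = 0) : I' = I := by
  refine (subset_antisymm hII' fun x hx => ?_).symm
  by_contra hxI
  have hI'I := (relRank_eq_zero_of_chain hR3 hII' hI'F hFE hF).2
  have hIsub : I ⊆ I' \ {x} := fun y hy => ⟨hII' hy, fun h => hxI (h ▸ hy)⟩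
  have := (relRank_eq_zero_of_chain hR3 hIsub sdiff_subset hI'.1 hI'I).1
  exact (hI'.2 x hx).ne' this

lemma relRank_eq_zero_of_forall_insert
    (hR4 : ∀ (B : Set α) (S : Set (Set α)), (∀ A' ∈ S, B ⊆ A' ∧ A' ⊆ E) →
      (∀ A' ∈ S, r A' B = 0) → r (⋃₀ S) B = 0)
    {I F : Set α} (hIF : I ⊆ F) (hFE : F ⊆ E) (h : ∀ x ∈ F, r (insert x I) I = 0) :
    r F I = 0 := by
  have hF : ⋃₀ ((fun x => insert x I) '' F) = F := by
    rw [sUnion_image]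
    exact subset_antisymm (iUnion₂_subset fun x hx => insert_subset hx hIF)
      fun x hx => mem_biUnion hx (mem_insert x I)
  rw [← hF]
  refine hR4 I _ ?_ ?_ <;> rintro _ ⟨x, hx, rfl⟩
  · exact ⟨subset_insert x I, insert_subset (hFE hx) (hIF.trans hFE)⟩
  · exact h x hx

end RelativeRank

theorem stmt_12 (E : Set α) (r : Set α → Set α → ℕ∞)
    (hR1 : ∀ A B : Set α, B ⊆ A → A ⊆ E → r A B ≤ (A \ B).encard)
    (hR3 : ∀ A B C : Set α, C ⊆ B → B ⊆ A → A ⊆ E → r A C = r A B + r B C)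
    (hR4 : ∀ (B : Set α) (S : Set (Set α)), (∀ A' ∈ S, B ⊆ A' ∧ A' ⊆ E) →
      (∀ A' ∈ S, r A' B = 0) → r (⋃₀ S) B = 0)
    (I F : Set α) (hI : RIndep E r I) (hIF : I ⊆ F) (hFE : F ⊆ E) :
    (RIndep E r I ∧ I ⊆ F ∧
        ∀ I' : Set α, RIndep E r I' → I ⊆ I' → I' ⊆ F → I' = I) ↔
      r F I = 0 := by
  constructor
  · rintro ⟨-, -, hmax⟩
    refine relRank_eq_zero_of_forall_insert hR4 hIF hFE fun x hxF => ?_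
    by_cases hxI : x ∈ I
    · rw [insert_eq_of_mem hxI]
      exact relRank_self_eq_zero hR1 (hIF.trans hFE)
    by_contra hne
    have hindep := hI.insert_of_relRank_pos_s12 hR1 hR3 hxI (hFE hxF) (pos_iff_ne_zero.mpr hne)
    exact hxI (hmax _ hindep (subset_insert x I) (insert_subset hxF hIF) ▸ mem_insert x I)
  · exact fun hF => ⟨hI, hIF, fun I' hI' hII' hI'F =>
      hI'.eq_of_relRank_eq_zero hR3 hII' hI'F hFE hF⟩
end

section
/- Let E be a set and let r assign to each pair B ⊆ A ⊆ E a value r(A|B) ∈ ℕ ∪ {∞} satisfying (R1) r(A|B) ≤ |A \ B|; (R3) r(A|C) = r(A|B) + r(B|C) for all C ⊆ B ⊆ A ⊆ E; and (R4) if A = ⋃_{γ∈Γ} A_γ with B ⊆ A_γ ⊆ E for all γ and r(A_γ|B) = 0 for all γ, then r(A|B) = 0. Then 𝓘_r satisfies the exchange axiom (I3): if I ∈ 𝓘_r is not maximal in 𝓘_r and I' is maximal in 𝓘_r, then I + x ∈ 𝓘_r for some x ∈ I' \ I. -/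
open Set

variable {α : Type*}

/-! Suppose no `x ∈ I' \ I` has `I + x ∈ 𝓘_r`. By (R1) and (R3), adding to an independent set an
element of positive relative rank keeps it independent, so `r(I + x | I) = 0` for every `x ∈ I'`,
and (R4) gives `r(I ∪ I' | I) = 0`. Maximality of `I'` gives `r(E | I') = 0` in the same way, so by
(R3) `r(E | I) = r(E | I ∪ I') + r(I ∪ I' | I) = 0`. But a set of relative rank `0` in `E` cannot be
properly extended inside `𝓘_r`, contradicting the non-maximality of `I`. -/

namespace RIndep

-- The axioms (R1), (R3) and (R4).
def RankLeEncard (E : Set α) (r : Set α → Set α → ℕ∞) : Prop :=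
  ∀ A B : Set α, B ⊆ A → A ⊆ E → r A B ≤ (A \ B).encard

def RankAdditive (E : Set α) (r : Set α → Set α → ℕ∞) : Prop :=
  ∀ A B C : Set α, C ⊆ B → B ⊆ A → A ⊆ E → r A C = r A B + r B C

def RankZeroSUnion (E : Set α) (r : Set α → Set α → ℕ∞) : Prop :=
  ∀ (B : Set α) (S : Set (Set α)), (∀ A' ∈ S, B ⊆ A' ∧ A' ⊆ E) →
    (∀ A' ∈ S, r A' B = 0) → r (⋃₀ S) B = 0

variable {E : Set α} {r : Set α → Set α → ℕ∞}

lemma rank_self (hR1 : RankLeEncard E r) {A : Set α} (hA : A ⊆ E) : r A A = 0 := by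
  simpa using hR1 A A subset_rfl hA

lemma rank_le_rank_of_subset_right (hR3 : RankAdditive E r) {A B C : Set α} (hCB : C ⊆ B)
    (hBA : B ⊆ A) (hA : A ⊆ E) : r A B ≤ r A C := by
  rw [hR3 A B C hCB hBA hA]
  exact le_self_add

lemma rank_le_rank_of_subset_left (hR3 : RankAdditive E r) {A B C : Set α} (hCB : C ⊆ B)
    (hBA : B ⊆ A) (hA : A ⊆ E) : r B C ≤ r A C := by
  rw [hR3 A B C hCB hBA hA]
  exact le_add_self

lemma union_singleton (hR1 : RankLeEncard E r) (hR3 : RankAdditive E r) {J : Set α} {x : α}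
    (hJ : RIndep E r J) (hxE : x ∈ E) (hxJ : x ∉ J) (hpos : 0 < r (J ∪ {x}) J) :
    RIndep E r (J ∪ {x}) := by
  have hJxE : J ∪ {x} ⊆ E := union_subset hJ.1 (singleton_subset_iff.mpr hxE)
  refine ⟨hJxE, fun y hy => ?_⟩
  obtain rfl | hyx := eq_or_ne y x
  · rwa [union_sdiff_cancel_right (by simpa using hxJ)]
  have hyJ : y ∈ J := hy.resolve_right hyx
  have hdrop : (J ∪ {x}) \ {y} = J \ {y} ∪ {x} := by
    rw [union_sdiff_distrib, sdiff_singleton_eq_self (s := {x}) (by simpa using hyx)]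
  have hsub : J \ {y} ⊆ (J ∪ {x}) \ {y} := sdiff_subset_sdiff_left subset_union_left
  -- `r(J + x | J - y)` is at least `1 + 1` through `J`, and at most `1` through `J + x - y`.
  have htwo : 2 ≤ r (J ∪ {x}) (J \ {y}) := by
    rw [hR3 _ J _ sdiff_subset subset_union_left hJxE, ← one_add_one_eq_two]
    exact add_le_add (Order.one_le_iff_pos.mpr hpos) (Order.one_le_iff_pos.mpr (hJ.2 y hyJ))
  have hone : r ((J ∪ {x}) \ {y}) (J \ {y}) ≤ 1 := calc
    _ ≤ (((J ∪ {x}) \ {y}) \ (J \ {y})).encard := hR1 _ _ hsub (sdiff_subset.trans hJxE)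
    _ ≤ ({x} : Set α).encard := by
      rw [hdrop, union_sdiff_left]
      exact encard_mono sdiff_subset
    _ = 1 := encard_singleton x
  rw [hR3 _ _ _ hsub sdiff_subset hJxE] at htwo
  by_contra hzero
  rw [nonpos_iff_eq_zero.mp (not_lt.mp hzero), zero_add] at htwo
  exact absurd (htwo.trans hone) (by norm_num)

lemma rank_eq_zero_of_forall_union_singleton (hR1 : RankLeEncard E r) (hR4 : RankZeroSUnion E r)
    {J A : Set α} (hJA : J ⊆ A) (hAE : A ⊆ E) (hzero : ∀ x ∈ A, r (J ∪ {x}) J = 0) :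
    r A J = 0 := by
  have hcover : ⋃₀ insert J ((fun x => J ∪ {x}) '' A) = A := by
    refine subset_antisymm (sUnion_subset ?_) fun y hy => ⟨J ∪ {y}, Or.inr ⟨y, hy, rfl⟩, Or.inr rfl⟩
    rintro _ (rfl | ⟨x, hxA, rfl⟩)
    · exact hJA
    · exact union_subset hJA (singleton_subset_iff.mpr hxA)
  rw [← hcover]
  apply hR4
  · rintro _ (rfl | ⟨x, hxA, rfl⟩)
    · exact ⟨subset_rfl, hJA.trans hAE⟩
    · exact ⟨subset_union_left, union_subset (hJA.trans hAE) (singleton_subset_iff.mpr (hAE hxA))⟩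
  · rintro _ (rfl | ⟨x, hxA, rfl⟩)
    · exact rank_self hR1 (hJA.trans hAE)
    · exact hzero x hxA

lemma rank_union_eq_zero (hR1 : RankLeEncard E r) (hR3 : RankAdditive E r)
    (hR4 : RankZeroSUnion E r) {J A : Set α} (hJ : RIndep E r J) (hAE : A ⊆ E)
    (hA : ∀ x ∈ A \ J, ¬ RIndep E r (J ∪ {x})) : r (J ∪ A) J = 0 := by
  refine rank_eq_zero_of_forall_union_singleton hR1 hR4 subset_union_left (union_subset hJ.1 hAE)
    fun x hx => ?_
  by_cases hxJ : x ∈ J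
  · rw [union_eq_self_of_subset_right (singleton_subset_iff.mpr hxJ)]
    exact rank_self hR1 hJ.1
  have hxA : x ∈ A := hx.resolve_left hxJ
  by_contra hne
  exact hA x ⟨hxA, hxJ⟩ (union_singleton hR1 hR3 hJ (hAE hxA) hxJ (pos_iff_ne_zero.mpr hne))

lemma rank_eq_zero_of_maximal (hR1 : RankLeEncard E r) (hR3 : RankAdditive E r)
    (hR4 : RankZeroSUnion E r) {J : Set α} (hJ : Maximal (RIndep E r) J) : r E J = 0 := by
  have h := rank_union_eq_zero hR1 hR3 hR4 hJ.1 subset_rfl fun x hx hind =>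
    hx.2 (hJ.2 hind subset_union_left (mem_union_right J rfl))
  rwa [union_eq_self_of_subset_left hJ.1.1] at h

lemma maximal_of_rank_eq_zero (hR3 : RankAdditive E r) {J : Set α} (hJ : RIndep E r J)
    (hJ0 : r E J = 0) : Maximal (RIndep E r) J := by
  refine ⟨hJ, fun K hK hJK x hxK => ?_⟩
  by_contra hxJ
  have hKx : r E (K \ {x}) = 0 := nonpos_iff_eq_zero.mp <|
    hJ0 ▸ rank_le_rank_of_subset_right hR3 (subset_sdiff_singleton hJK hxJ)
      (sdiff_subset.trans hK.1) subset_rfl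
  have hpos := (hK.2 x hxK).trans_le (rank_le_rank_of_subset_left hR3 sdiff_subset hK.1 subset_rfl)
  exact hpos.ne' hKx

end RIndep

open RIndep in
theorem stmt_13 (E : Set α) (r : Set α → Set α → ℕ∞)
    (hR1 : ∀ A B : Set α, B ⊆ A → A ⊆ E → r A B ≤ (A \ B).encard)
    (hR3 : ∀ A B C : Set α, C ⊆ B → B ⊆ A → A ⊆ E → r A C = r A B + r B C)
    (hR4 : ∀ (B : Set α) (S : Set (Set α)), (∀ A' ∈ S, B ⊆ A' ∧ A' ⊆ E) →
      (∀ A' ∈ S, r A' B = 0) → r (⋃₀ S) B = 0)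
    (I I' : Set α) (hI : RIndep E r I) (hInotmax : ¬ Maximal (RIndep E r) I)
    (hI'max : Maximal (RIndep E r) I') :
    ∃ x ∈ I' \ I, RIndep E r (I ∪ {x}) := by
  by_contra! hnone
  have hUE : I ∪ I' ⊆ E := union_subset hI.1 hI'max.1.1
  have hUI : r (I ∪ I') I = 0 := rank_union_eq_zero hR1 hR3 hR4 hI hI'max.1.1 hnone
  have hEU : r E (I ∪ I') = 0 := nonpos_iff_eq_zero.mp <|
    rank_eq_zero_of_maximal hR1 hR3 hR4 hI'max ▸
      rank_le_rank_of_subset_right hR3 subset_union_right hUE subset_rfl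
  refine hInotmax (maximal_of_rank_eq_zero hR3 hI ?_)
  rw [hR3 E (I ∪ I') I subset_union_left hUE subset_rfl, hEU, hUI, add_zero]
end

section
/- Let E be a set and let r assign to each pair B ⊆ A ⊆ E a value r(A|B) ∈ ℕ ∪ {∞} satisfying (R1) r(A|B) ≤ |A \ B|; (R3) r(A|C) = r(A|B) + r(B|C) for all C ⊆ B ⊆ A ⊆ E; (R4) if A = ⋃_{γ∈Γ} A_γ with B ⊆ A_γ ⊆ E for all γ and r(A_γ|B) = 0 for all γ, then r(A|B) = 0; and (R5) for all B ⊆ A ⊆ E there exists I ∈ 𝓘_r with I ⊆ A such that r(A|I) = 0 and r(B | B∩I) = 0. Then 𝓘_r satisfies the maximality axiom (IM): for every I ∈ 𝓘_r and every X with I ⊆ X ⊆ E, the set {I' ∈ 𝓘_r : I ⊆ I' ⊆ X} has an inclusionwise maximal element. -/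
/-!
Apply (R5) to `I ⊆ X` to get an independent `J ⊆ X` with `r(X | J) = 0` and
`r(I | I ∩ J) = 0`. By (R3), `r(A | C) = 0` forces `r(A | A \ {x}) = 0` for every
`x ∈ A \ C`, so an independent set has positive rank over each of its proper subsets.
Hence `I ⊆ J`, and any independent `J'` with `J ⊆ J' ⊆ X` has `r(J' | J) = 0`,
so `J' = J`.
-/

open Set

variable {α : Type*}

theorem rel_eq_zero_iff_of_subset {E : Set α} {r : Set α → Set α → ℕ∞}
    (hR3 : ∀ A B C : Set α, C ⊆ B → B ⊆ A → A ⊆ E → r A C = r A B + r B C)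
    {A B C : Set α} (hCB : C ⊆ B) (hBA : B ⊆ A) (hA : A ⊆ E) :
    r A C = 0 ↔ r A B = 0 ∧ r B C = 0 := by
  rw [hR3 A B C hCB hBA hA, add_eq_zero]

theorem RIndep.subset_of_rel_eq_zero {E : Set α} {r : Set α → Set α → ℕ∞}
    (hR3 : ∀ A B C : Set α, C ⊆ B → B ⊆ A → A ⊆ E → r A C = r A B + r B C)
    {I C : Set α} (hI : RIndep E r I) (hCI : C ⊆ I) (h : r I C = 0) : I ⊆ C := by
  intro x hxI
  by_contra hxC
  have hzero := ((rel_eq_zero_iff_of_subset hR3 (subset_sdiff_singleton hCI hxC)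
    sdiff_subset hI.1).mp h).1
  exact (hI.2 x hxI).ne' hzero

theorem stmt_14_general (E : Set α) (r : Set α → Set α → ℕ∞)
    (hR3 : ∀ A B C : Set α, C ⊆ B → B ⊆ A → A ⊆ E → r A C = r A B + r B C)
    (hR5 : ∀ A B : Set α, B ⊆ A → A ⊆ E →
      ∃ I : Set α, RIndep E r I ∧ I ⊆ A ∧ r A I = 0 ∧ r B (B ∩ I) = 0) :
    ∀ I X : Set α, RIndep E r I → I ⊆ X → X ⊆ E →
      ∃ J : Set α, RIndep E r J ∧ I ⊆ J ∧ J ⊆ X ∧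
        ∀ J' : Set α, RIndep E r J' → I ⊆ J' → J' ⊆ X → J ⊆ J' → J' = J := by
  intro I X hI hIX hXE
  obtain ⟨J, hJ, hJX, hXJ, hIJ⟩ := hR5 X I hIX hXE
  have hI_sub_J : I ⊆ J :=
    (hI.subset_of_rel_eq_zero hR3 inter_subset_left hIJ).trans inter_subset_right
  refine ⟨J, hJ, hI_sub_J, hJX, fun J' hJ' _ hJ'X hJJ' => ?_⟩
  have hJ'J : r J' J = 0 := ((rel_eq_zero_iff_of_subset hR3 hJJ' hJ'X hXE).mp hXJ).2
  exact (hJ'.subset_of_rel_eq_zero hR3 hJJ' hJ'J).antisymm hJJ'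

theorem stmt_14 (E : Set α) (r : Set α → Set α → ℕ∞)
    (hR1 : ∀ A B : Set α, B ⊆ A → A ⊆ E → r A B ≤ (A \ B).encard)
    (hR3 : ∀ A B C : Set α, C ⊆ B → B ⊆ A → A ⊆ E → r A C = r A B + r B C)
    (hR4 : ∀ (B : Set α) (S : Set (Set α)), (∀ A' ∈ S, B ⊆ A' ∧ A' ⊆ E) →
      (∀ A' ∈ S, r A' B = 0) → r (⋃₀ S) B = 0)
    (hR5 : ∀ A B : Set α, B ⊆ A → A ⊆ E →
      ∃ I : Set α, RIndep E r I ∧ I ⊆ A ∧ r A I = 0 ∧ r B (B ∩ I) = 0) :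
    ∀ I X : Set α, RIndep E r I → I ⊆ X → X ⊆ E →
      ∃ J : Set α, RIndep E r J ∧ I ⊆ J ∧ J ⊆ X ∧
        ∀ J' : Set α, RIndep E r J' → I ⊆ J' → J' ⊆ X → J ⊆ J' → J' = J :=
  stmt_14_general E r hR3 hR5
end

section
/- Let E be a set and let r assign to each pair B ⊆ A ⊆ E a value r(A|B) ∈ ℕ ∪ {∞} satisfying (R1), (R3), (R4) as above. If I ∈ 𝓘_r is a finite set, then r(I | ∅) = |I|. -/
/-!
Deleting a point preserves independence: if `r(I - x | I - x - y) = 0` for distinct `x, y ∈ I`,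
then comparing the two (R3)-decompositions of `r(I | I - x - y)` through `I - x` and `I - y`
(both steps `r(I | I - z)` equal `1` by (R1)) forces `r(I - y | I - x - y) = 0` as well, and (R4)
applied to `(I - x) ∪ (I - y) = I` gives `r(I | I - x - y) = 0`, which is absurd.
Hence `r(I | ∅) = r(I | I - x) + r(I - x | ∅) = 1 + |I - x|` by induction on `|I|`.
-/

open Set

variable {α : Type*}

def RelRankLeEncard (E : Set α) (r : Set α → Set α → ℕ∞) : Prop :=
  ∀ A B : Set α, B ⊆ A → A ⊆ E → r A B ≤ (A \ B).encard

def RelRankAdditive (E : Set α) (r : Set α → Set α → ℕ∞) : Prop :=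
  ∀ A B C : Set α, C ⊆ B → B ⊆ A → A ⊆ E → r A C = r A B + r B C

def RelRankSUnionZero (E : Set α) (r : Set α → Set α → ℕ∞) : Prop :=
  ∀ (B : Set α) (S : Set (Set α)), (∀ A' ∈ S, B ⊆ A' ∧ A' ⊆ E) →
    (∀ A' ∈ S, r A' B = 0) → r (⋃₀ S) B = 0

namespace RIndep

variable {E : Set α} {r : Set α → Set α → ℕ∞} {J : Set α} {x : α}

theorem relRank_diff_singleton_eq_one (hR1 : RelRankLeEncard E r) (hJ : RIndep E r J)
    (hx : x ∈ J) : r J (J \ {x}) = 1 := by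
  refine le_antisymm ?_ (Order.one_le_iff_pos.2 (hJ.2 x hx))
  have h := hR1 J (J \ {x}) sdiff_subset hJ.1
  rwa [sdiff_sdiff_cancel_left (singleton_subset_iff.2 hx), encard_singleton] at h

theorem diff_singleton (hR1 : RelRankLeEncard E r) (hR3 : RelRankAdditive E r)
    (hR4 : RelRankSUnionZero E r) (hJ : RIndep E r J) (hx : x ∈ J) :
    RIndep E r (J \ {x}) := by
  refine ⟨sdiff_subset.trans hJ.1, fun y ⟨hy, hyx⟩ => pos_iff_ne_zero.2 fun hx0 => ?_⟩
  have hyx : y ≠ x := hyx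
  set K : Set α := (J \ {x}) \ {y}
  have hKx : K ⊆ J \ {x} := sdiff_subset
  have hKy : K ⊆ J \ {y} := fun z hz => ⟨hz.1.1, hz.2⟩
  have hJK : r J K = 1 := by
    rw [hR3 J _ K hKx sdiff_subset hJ.1, hJ.relRank_diff_singleton_eq_one hR1 hx, hx0, add_zero]
  have hy0 : r (J \ {y}) K = 0 := by
    have h := hR3 J _ K hKy sdiff_subset hJ.1
    rw [hJK, hJ.relRank_diff_singleton_eq_one hR1 hy] at h
    exact (WithTop.add_left_inj ENat.one_ne_top).1 (h.symm.trans (add_zero 1).symm)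
  have hunion : ⋃₀ {J \ {x}, J \ {y}} = J := by
    ext z
    by_cases hzx : z = x <;> simp_all [eq_comm]
  have hJ0 : r J K = 0 := by
    rw [← hunion]
    refine hR4 K _ ?_ ?_
    · rintro A' (rfl | rfl)
      exacts [⟨hKx, sdiff_subset.trans hJ.1⟩, ⟨hKy, sdiff_subset.trans hJ.1⟩]
    · rintro A' (rfl | rfl)
      exacts [hx0, hy0]
  exact one_ne_zero (hJK.symm.trans hJ0)

theorem relRank_empty_eq_encard (hR1 : RelRankLeEncard E r) (hR3 : RelRankAdditive E r)
    (hR4 : RelRankSUnionZero E r) (hJ : RIndep E r J) (hfin : J.Finite) :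
    r J ∅ = J.encard := by
  induction J, hfin using Set.Finite.induction_on with
  | empty => simpa using hR1 ∅ ∅ subset_rfl (empty_subset E)
  | @insert a s ha _ ih =>
    have hs : insert a s \ {a} = s := insert_sdiff_self_of_notMem ha
    have hsJ : RIndep E r s := hs ▸ hJ.diff_singleton hR1 hR3 hR4 (mem_insert a s)
    have has : r (insert a s) s = 1 := by
      simpa only [hs] using hJ.relRank_diff_singleton_eq_one hR1 (mem_insert a s)
    rw [hR3 _ s ∅ (empty_subset s) (subset_insert a s) hJ.1, has, ih hsJ,
      encard_insert_of_notMem ha, add_comm]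

end RIndep

theorem stmt_15 (E : Set α) (r : Set α → Set α → ℕ∞)
    (hR1 : ∀ A B : Set α, B ⊆ A → A ⊆ E → r A B ≤ (A \ B).encard)
    (hR3 : ∀ A B C : Set α, C ⊆ B → B ⊆ A → A ⊆ E → r A C = r A B + r B C)
    (hR4 : ∀ (B : Set α) (S : Set (Set α)), (∀ A' ∈ S, B ⊆ A' ∧ A' ⊆ E) →
      (∀ A' ∈ S, r A' B = 0) → r (⋃₀ S) B = 0)
    (I : Set α) (hI : RIndep E r I) (hfin : I.Finite) :
    r I ∅ = I.encard :=
  hI.relRank_empty_eq_encard hR1 hR3 hR4 hfin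
end
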